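/- With h₁ and h₂ as in the factorizations of the Villarceau motion (h₂ = e₁e₂ + 2x(e₁e₊-e₂e₃) + 2y(e₂e₊+e₁e₃) + 2z(e₃e₊-e₁e₂), h₁ = e₁e₂ + e₃e₊ - h₂, x² + y² + (z-1/4)² = 1/16), the bivariate polynomial identity (s - h₁)(t - h₂) = (t - h₂)(s - h₁) holds for commuting indeterminates s and t. -/
import Mathlib

open CliffordAlgebra Polynomial

noncomputable section

/-- The quadratic form of signature (4,1) on ℝ⁵. -/
def Qf : QuadraticForm ℝ (Fin 5 → ℝ) := QuadraticMap.weightedSumSquares ℝ ![1,1,1,1,-1]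

/-- Conformal geometric algebra of ℝ^{4,1}. -/
abbrev CGA := CliffordAlgebra Qf

/-- The orthonormal generators e₁, e₂, e₃, e₊, e₋ (indices 0,1,2,3,4). -/
def e (a : Fin 5) : CGA := ι Qf (Pi.single a 1)

def h₂ (x y z : ℝ) : CGA :=
  e 0 * e 1 + (2*x) • (e 0 * e 3 - e 1 * e 2) + (2*y) • (e 1 * e 3 + e 0 * e 2)
    + (2*z) • (e 2 * e 3 - e 0 * e 1)

def h₁ (x y z : ℝ) : CGA := (e 0 * e 1 + e 2 * e 3) - h₂ x y z

lemma he (a b : Fin 5) (h : a ≠ b) : e a * e b = -(e b * e a) := by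
  have key := CliffordAlgebra.ι_mul_ι_add_swap (Q := Qf) (Pi.single a 1) (Pi.single b 1)
  have hp : QuadraticMap.polar Qf (Pi.single a 1) (Pi.single b 1) = 0 := by
    simp [QuadraticMap.polar, Qf, QuadraticMap.weightedSumSquares_apply, Pi.single_apply,
      Fin.sum_univ_five]
    fin_cases a <;> fin_cases b <;> simp_all
  rw [hp, map_zero] at key
  have h2 : e a * e b + e b * e a = 0 := key
  exact eq_neg_of_add_eq_zero_left h2

lemma hsq (a : Fin 5) (h : a ≠ 4) : e a * e a = 1 := by
  have key := CliffordAlgebra.ι_sq_scalar (Q := Qf) (Pi.single a 1)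
  have hq : Qf (Pi.single a 1) = 1 := by
    simp [Qf, QuadraticMap.weightedSumSquares_apply, Pi.single_apply, Fin.sum_univ_five]
    fin_cases a <;> simp_all
  rw [hq] at key
  simpa [e] using key

lemma L3 (a b c : Fin 5) (ha : a ≠ 4) : e b * e a * (e a * e c) = e b * e c := by
  have h : e b * e a * (e a * e c) = e b * (e a * e a) * e c := by noncomm_ring
  rw [h, hsq a ha, mul_one]

lemma L1 (a b c : Fin 5) (hab : a ≠ b) (ha : a ≠ 4) :
    e a * e b * (e a * e c) = -(e b * e c) := by
  have h : e a * e b * (e a * e c) = e a * (e b * e a) * e c := by noncomm_ring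
  rw [h, he b a hab.symm]
  have h2 : e a * -(e a * e b) * e c = -(e a * e a * (e b * e c)) := by noncomm_ring
  rw [h2, hsq a ha, one_mul]

lemma L2 (a b c : Fin 5) (hab : a ≠ b) (hac : a ≠ c) (ha : a ≠ 4) :
    e a * e b * (e c * e a) = e b * e c := by
  rw [he c a hac.symm, mul_neg, L1 a b c hab ha, neg_neg]

lemma L4 (a b c : Fin 5) (hac : a ≠ c) (ha : a ≠ 4) :
    e b * e a * (e c * e a) = -(e b * e c) := by
  rw [he c a hac.symm, mul_neg, L3 a b c ha]

lemma dcomm (a b c d : Fin 5) (hbc : b ≠ c) (hac : a ≠ c) (hbd : b ≠ d) (had : a ≠ d) :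
    e a * e b * (e c * e d) = e c * e d * (e a * e b) := by
  calc e a * e b * (e c * e d) = e a * (e b * e c) * e d := by noncomm_ring
    _ = -(e a * (e c * e b) * e d) := by rw [he b c hbc]; noncomm_ring
    _ = -(e a * e c * (e b * e d)) := by noncomm_ring
    _ = -(-(e c * e a) * -(e d * e b)) := by rw [he a c hac, he b d hbd]
    _ = -(e c * (e a * e d) * e b) := by noncomm_ring
    _ = e c * (e d * e a) * e b := by rw [he a d had]; noncomm_ring
    _ = e c * e d * (e a * e b) := by noncomm_ring

/-- A := e₀e₁ + e₂e₃ commutes with h₂. -/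
lemma A_comm_h₂ (x y z : ℝ) :
    (e 0 * e 1 + e 2 * e 3) * h₂ x y z = h₂ x y z * (e 0 * e 1 + e 2 * e 3) := by
  set A := e 0 * e 1 + e 2 * e 3 with hA
  have hA0 : A * (e 0 * e 1) = (e 0 * e 1) * A := by
    rw [hA, add_mul, mul_add, dcomm 2 3 0 1 (by decide) (by decide) (by decide) (by decide)]
  have hq1l : A * (e 0 * e 3 - e 1 * e 2) = 0 := by
    rw [hA, add_mul, mul_sub, mul_sub,
      L1 0 1 3 (by decide) (by decide),
      L3 1 0 2 (by decide),
      L4 3 2 0 (by decide) (by decide),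
      L2 2 3 1 (by decide) (by decide) (by decide),
      he 2 0 (by decide), he 3 1 (by decide)]
    abel
  have hq1r : (e 0 * e 3 - e 1 * e 2) * A = 0 := by
    rw [hA, mul_add, sub_mul, sub_mul,
      L1 0 3 1 (by decide) (by decide),
      L2 1 2 0 (by decide) (by decide) (by decide),
      L4 3 0 2 (by decide) (by decide),
      L3 2 1 3 (by decide),
      he 3 1 (by decide), he 2 0 (by decide)]
    abel
  have hq2l : A * (e 1 * e 3) + A * (e 0 * e 2) = 0 := by
    rw [hA, add_mul, add_mul,
      L3 1 0 3 (by decide),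
      L1 0 1 2 (by decide) (by decide),
      L4 3 2 1 (by decide) (by decide),
      L2 2 3 0 (by decide) (by decide) (by decide),
      he 2 1 (by decide), he 3 0 (by decide)]
    abel
  have hq2r : e 1 * e 3 * A + e 0 * e 2 * A = 0 := by
    rw [hA, mul_add, mul_add,
      L2 1 3 0 (by decide) (by decide) (by decide),
      L1 0 2 1 (by decide) (by decide),
      L4 3 1 2 (by decide) (by decide),
      L3 2 0 3 (by decide),
      he 3 0 (by decide), he 2 1 (by decide)]
    abel
  have hA3 : A * (e 2 * e 3 - e 0 * e 1) = (e 2 * e 3 - e 0 * e 1) * A := by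
    rw [hA]
    have d : e 0 * e 1 * (e 2 * e 3) = e 2 * e 3 * (e 0 * e 1) :=
      dcomm 0 1 2 3 (by decide) (by decide) (by decide) (by decide)
    rw [mul_sub, sub_mul, add_mul, add_mul, mul_add, mul_add, d]
  simp only [h₂, mul_add, add_mul, smul_mul_assoc, mul_smul_comm]
  rw [hA0, hq1l, hq1r, hq2l, hq2r, hA3]

lemma h_comm (x y z : ℝ) : h₁ x y z * h₂ x y z = h₂ x y z * h₁ x y z := by
  rw [h₁, sub_mul, mul_sub, A_comm_h₂]

/-- the bivariate identity (s - h₁)(t - h₂) = (t - h₂)(s - h₁) holds,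
where we realize the bivariate polynomial ring as Polynomial (Polynomial CGA) with
s = C X the first and t = X the second (central) indeterminate. -/
theorem villarceau_bivariate_commute (x y z : ℝ)
    (hs : x^2 + y^2 + (z - 1/4)^2 = 1/16) :
    (C (X : Polynomial CGA) - C (C (h₁ x y z))) * ((X : Polynomial (Polynomial CGA)) - C (C (h₂ x y z)))
      = ((X : Polynomial (Polynomial CGA)) - C (C (h₂ x y z))) * (C (X : Polynomial CGA) - C (C (h₁ x y z))) := by
  have hcc : Commute (h₁ x y z) (h₂ x y z) := h_comm x y z
  have hc : Commute (C (C (h₁ x y z)) : Polynomial (Polynomial CGA)) (C (C (h₂ x y z))) :=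
    (hcc.map (C : CGA →+* Polynomial CGA)).map
      (C : Polynomial CGA →+* Polynomial (Polynomial CGA))
  have c1 : Commute (C (X : Polynomial CGA)) ((X : Polynomial (Polynomial CGA)) - C (C (h₂ x y z))) :=
    (commute_X (C (X : Polynomial CGA))).symm.sub_right
      ((commute_X (C (h₂ x y z))).map (C : Polynomial CGA →+* Polynomial (Polynomial CGA)))
  have c2 : Commute (C (C (h₁ x y z)) : Polynomial (Polynomial CGA)) ((X : Polynomial (Polynomial CGA)) - C (C (h₂ x y z))) :=
    (commute_X (C (C (h₁ x y z)))).symm.sub_right hc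
  exact (c1.sub_left c2).eq
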